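/- Let f : [0, 1) → ℝ be a function in 𝒯 such that ∫₀¹ f(t) dt = 1/2 and f(t) ≥ 0 for every t ∈ [0, 1). Then there exist a positive odd integer a and some c ∈ [0, 1) such that either f(t) = fract(a·t + c) for all t ∈ [0, 1), or f(t) = 1 − fract(a·t + c) for all t ∈ [0, 1). -/

import Mathlib

noncomputable section

open MeasureTheory

/-- The abelian group `𝒯` of functions generated by `t ↦ fract (t - a)` and
`t ↦ 1 - fract (t - a)` for `a ∈ [0, 1)`, realized as an additive subgroup of `ℝ → ℝ`
(all its elements are periodic with period 1, hence determined by their values on `[0, 1)`). -/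
def calT : AddSubgroup (ℝ → ℝ) :=
  AddSubgroup.closure {f : ℝ → ℝ | ∃ a ∈ Set.Ico (0:ℝ) 1,
    f = (fun t => Int.fract (t - a)) ∨ f = (fun t => 1 - Int.fract (t - a))}

lemma fract_rc (x : ℝ) : ContinuousWithinAt Int.fract (Set.Ici x) x := by
  have h2 : ContinuousWithinAt (fun y : ℝ => y - (⌊x⌋ : ℝ)) (Set.Ici x) x :=
    (continuous_id.sub continuous_const).continuousWithinAt
  apply h2.congr_of_eventuallyEq
  · have hlt : ∀ᶠ y in nhdsWithin x (Set.Ici x), y < (⌊x⌋ : ℝ) + 1 :=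
      (Filter.Tendsto.eventually_lt_const (Int.lt_floor_add_one x)
        (Filter.tendsto_id.mono_left nhdsWithin_le_nhds))
    filter_upwards [self_mem_nhdsWithin, hlt] with y hy hy'
    have : ⌊y⌋ = ⌊x⌋ := by
      rw [Int.floor_eq_iff]
      exact ⟨le_trans (Int.floor_le x) hy, hy'⟩
    rw [← Int.self_sub_floor, this]
  · rw [← Int.self_sub_floor]

lemma rc_affine {a : ℝ} (ha : 0 ≤ a) (c x : ℝ) :
    ContinuousWithinAt (fun t => Int.fract (a * t + c)) (Set.Ici x) x := by
  have hmap : Set.MapsTo (fun t : ℝ => a * t + c) (Set.Ici x) (Set.Ici (a * x + c)) := by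
    intro y hy
    have : a * x ≤ a * y := mul_le_mul_of_nonneg_left hy ha
    simpa using add_le_add_right this c
  have h1 : ContinuousWithinAt (fun t : ℝ => a * t + c) (Set.Ici x) x := Continuous.continuousWithinAt (by continuity)
  exact ContinuousWithinAt.comp (g := Int.fract) (f := fun t : ℝ => a * t + c)
    (fract_rc (a * x + c)) h1 hmap

lemma intInt_fract_affine (a c t₁ t₂ : ℝ) :
    IntervalIntegrable (fun t => Int.fract (a * t + c)) volume t₁ t₂ := by
  rw [intervalIntegrable_iff]
  haveI : IsFiniteMeasure (volume.restrict (Set.uIoc t₁ t₂)) := by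
    constructor
    rw [Measure.restrict_apply_univ, Set.uIoc]
    exact measure_Ioc_lt_top
  apply Integrable.mono' (integrable_const (1:ℝ))
  · exact (measurable_fract.comp ((measurable_id.const_mul a).add_const c)).aestronglyMeasurable
  · refine Filter.Eventually.of_forall fun t => ?_
    rw [Real.norm_eq_abs, abs_of_nonneg (Int.fract_nonneg _)]
    exact (Int.fract_lt_one _).le

lemma intInt_fract (t₁ t₂ : ℝ) : IntervalIntegrable Int.fract volume t₁ t₂ := by
  have := intInt_fract_affine 1 0 t₁ t₂
  simpa using this

lemma integral_fract_01 : ∫ t in (0:ℝ)..1, Int.fract t = 1/2 := by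
  have hne : ∀ᵐ t : ℝ, t ≠ (1:ℝ) := by
    have h0 : volume ({(1:ℝ)} : Set ℝ) = 0 := Real.volume_singleton
    have := compl_mem_ae_iff.2 h0
    filter_upwards [this] with t ht
    simpa using ht
  have h : ∫ t in (0:ℝ)..1, Int.fract t = ∫ t in (0:ℝ)..1, t := by
    apply intervalIntegral.integral_congr_ae
    filter_upwards [hne] with t ht htm
    rw [Set.uIoc_of_le (by norm_num : (0:ℝ) ≤ 1)] at htm
    exact Int.fract_eq_self.2 ⟨htm.1.le, lt_of_le_of_ne htm.2 ht⟩
  rw [h, integral_id]; norm_num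

lemma integral_fract_affine (n : ℤ) (hn : n ≠ 0) (c : ℝ) :
    ∫ t in (0:ℝ)..1, Int.fract ((n:ℝ) * t + c) = 1/2 := by
  have hn' : (n:ℝ) ≠ 0 := Int.cast_ne_zero.mpr hn
  rw [intervalIntegral.integral_comp_mul_add Int.fract hn' c]
  have h1 : (n:ℝ) * 0 + c = c := by ring
  have h2 : (n:ℝ) * 1 + c = c + n • (1:ℝ) := by rw [zsmul_eq_mul]; ring
  rw [h1, h2, (Int.fract_periodic ℝ).intervalIntegral_add_zsmul_eq n c intInt_fract,
    (Int.fract_periodic ℝ).intervalIntegral_add_eq c 0]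
  rw [zero_add, integral_fract_01, zsmul_eq_mul, smul_eq_mul]
  field_simp

lemma ae_ne_one : ∀ᵐ t : ℝ, t ≠ (1:ℝ) := by
  have h0 : volume ({(1:ℝ)} : Set ℝ) = 0 := Real.volume_singleton
  filter_upwards [compl_mem_ae_iff.2 h0] with t ht
  simpa using ht

lemma pointwise_of_ae (D : ℝ → ℝ)
    (hnull : volume ({t | D t ≠ 0} ∩ Set.Ioc (0:ℝ) 1) = 0)
    (t : ℝ) (ht : t ∈ Set.Ico (0:ℝ) 1)
    (hrc : ContinuousWithinAt D (Set.Ici t) t) : D t = 0 := by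
  have htd : Filter.Tendsto D (nhdsWithin t (Set.Ioi t)) (nhds (D t)) :=
    hrc.tendsto.mono_left (nhdsWithin_mono t Set.Ioi_subset_Ici_self)
  have hfreq : ∃ᶠ x in nhdsWithin t (Set.Ioi t), D x = 0 := by
    rw [Filter.frequently_iff]
    intro U hU
    obtain ⟨u, hu, hsub⟩ := mem_nhdsGT_iff_exists_Ioo_subset.1 hU
    set v := min u 1 with hv
    have htv : t < v := lt_min hu ht.2
    by_contra hcon
    push_neg at hcon
    have hsubN : Set.Ioo t v ⊆ {x | D x ≠ 0} ∩ Set.Ioc (0:ℝ) 1 := by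
      intro x hx
      refine ⟨hcon x (hsub ⟨hx.1, lt_of_lt_of_le hx.2 (min_le_left _ _)⟩), ?_, ?_⟩
      · exact lt_of_le_of_lt ht.1 hx.1
      · exact le_trans hx.2.le (min_le_right _ _)
    have h0 : volume (Set.Ioo t v) = 0 := measure_mono_null hsubN hnull
    rw [Real.volume_Ioo] at h0
    have : v - t ≤ 0 := by
      by_contra hlt
      push_neg at hlt
      exact (ENNReal.ofReal_pos.2 hlt).ne' h0
    linarith
  exact tendsto_nhds_unique_of_frequently_eq htd tendsto_const_nhds hfreq

lemma calT_rep (f : ℝ → ℝ) (hf : f ∈ calT) :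
    ∃ s m : ℤ, ∃ c : ℝ, (∀ t : ℝ, ∃ k : ℤ, f t = s * t + c + k) ∧
      IntervalIntegrable f volume 0 1 ∧
      (∫ t in (0:ℝ)..1, f t) = s / 2 + m ∧
      (∀ x : ℝ, ContinuousWithinAt f (Set.Ici x) x) := by
  induction hf using AddSubgroup.closure_induction with
  | mem g hg =>
    obtain ⟨a, _, hor⟩ := hg
    rcases hor with rfl | rfl
    · refine ⟨1, 0, -a, fun t => ⟨-⌊t - a⌋, by show Int.fract (t - a) = _; rw [← Int.self_sub_floor]; push_cast; ring⟩,
        ?_, ?_, fun x => ?_⟩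
      · simpa only [one_mul, ← sub_eq_add_neg] using intInt_fract_affine 1 (-a) 0 1
      · have h := integral_fract_affine 1 one_ne_zero (-a)
        simp only [Int.cast_one, one_mul, ← sub_eq_add_neg] at h
        rw [h]; norm_num
      · simpa only [one_mul, ← sub_eq_add_neg] using rc_affine zero_le_one (-a) x
    · refine ⟨-1, 1, a + 1, fun t => ⟨⌊t - a⌋, by show 1 - Int.fract (t - a) = _; rw [← Int.self_sub_floor]; push_cast; ring⟩,
        ?_, ?_, fun x => ?_⟩
      · refine intervalIntegrable_const.sub ?_
        simpa only [one_mul, ← sub_eq_add_neg] using intInt_fract_affine 1 (-a) 0 1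
      · have h := integral_fract_affine 1 one_ne_zero (-a)
        simp only [Int.cast_one, one_mul, ← sub_eq_add_neg] at h
        rw [intervalIntegral.integral_sub intervalIntegrable_const
          (by simpa only [one_mul, ← sub_eq_add_neg] using intInt_fract_affine 1 (-a) 0 1), h]
        simp; norm_num
      · exact continuousWithinAt_const.sub
          (by simpa only [one_mul, ← sub_eq_add_neg] using rc_affine zero_le_one (-a) x)
  | zero =>
    refine ⟨0, 0, 0, fun t => ⟨0, by simp⟩, ?_, ?_, fun x => ?_⟩
    · exact intervalIntegrable_const
    · simp
    · exact continuousWithinAt_const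
  | add g h hg hh ihg ihh =>
    obtain ⟨s1, m1, c1, hk1, hi1, hv1, hrc1⟩ := ihg
    obtain ⟨s2, m2, c2, hk2, hi2, hv2, hrc2⟩ := ihh
    refine ⟨s1 + s2, m1 + m2, c1 + c2, fun t => ?_, hi1.add hi2, ?_, fun x => ?_⟩
    · obtain ⟨k1, e1⟩ := hk1 t
      obtain ⟨k2, e2⟩ := hk2 t
      exact ⟨k1 + k2, by rw [Pi.add_apply, e1, e2]; push_cast; ring⟩
    · have : (∫ t in (0:ℝ)..1, (g + h) t) = (∫ t in (0:ℝ)..1, g t) + ∫ t in (0:ℝ)..1, h t := by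
        simp only [Pi.add_apply]
        exact intervalIntegral.integral_add hi1 hi2
      rw [this, hv1, hv2]; push_cast; ring
    · exact (hrc1 x).add (hrc2 x)
  | neg g hg ihg =>
    obtain ⟨s1, m1, c1, hk1, hi1, hv1, hrc1⟩ := ihg
    refine ⟨-s1, -m1, -c1, fun t => ?_, hi1.neg, ?_, fun x => ?_⟩
    · obtain ⟨k1, e1⟩ := hk1 t
      exact ⟨-k1, by rw [Pi.neg_apply, e1]; push_cast; ring⟩
    · have : (∫ t in (0:ℝ)..1, (-g) t) = -(∫ t in (0:ℝ)..1, g t) := by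
        simp only [Pi.neg_apply]
        exact intervalIntegral.integral_neg
      rw [this, hv1]; push_cast; ring
    · exact (hrc1 x).neg

lemma main_case (f g : ℝ → ℝ)
    (hDnn : ∀ᵐ t ∂(volume.restrict (Set.Ioc (0:ℝ) 1)), 0 ≤ f t - g t)
    (hfi : IntervalIntegrable f volume 0 1) (hgi : IntervalIntegrable g volume 0 1)
    (hint : (∫ t in (0:ℝ)..1, f t) = ∫ t in (0:ℝ)..1, g t)
    (hrc : ∀ x, ContinuousWithinAt (fun t => f t - g t) (Set.Ici x) x) :
    ∀ t ∈ Set.Ico (0:ℝ) 1, f t = g t := by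
  have hDi : IntegrableOn (fun t => f t - g t) (Set.Ioc (0:ℝ) 1) volume :=
    (intervalIntegrable_iff_integrableOn_Ioc_of_le (by norm_num)).1 (hfi.sub hgi)
  have h1 : (∫ t in (0:ℝ)..1, (f t - g t)) = 0 := by
    rw [intervalIntegral.integral_sub hfi hgi, hint]; ring
  rw [intervalIntegral.integral_of_le (by norm_num : (0:ℝ) ≤ 1)] at h1
  have hae : (fun t => f t - g t) =ᵐ[volume.restrict (Set.Ioc (0:ℝ) 1)] 0 :=
    (integral_eq_zero_iff_of_nonneg_ae hDnn hDi).1 h1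
  have hnull : volume ({t | f t - g t ≠ 0} ∩ Set.Ioc (0:ℝ) 1) = 0 := by
    have h2 : (volume.restrict (Set.Ioc (0:ℝ) 1)) {t | ¬ (f t - g t = 0)} = 0 := by
      have := Filter.eventuallyEq_iff_exists_mem.1 hae
      rw [Filter.EventuallyEq, ae_iff] at hae
      simpa using hae
    rwa [Measure.restrict_apply' measurableSet_Ioc] at h2
  intro t ht
  exact sub_eq_zero.1 (pointwise_of_ae _ hnull t ht (hrc t))

/-- If f ∈ 𝒯 has integral 1/2 over [0,1) and is nonnegative on [0,1), then there are a
positive odd integer a and c ∈ [0,1) with f(t) = fract(a·t + c) for all t ∈ [0,1), or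
f(t) = 1 - fract(a·t + c) for all t ∈ [0,1). -/
theorem statement14 (f : ℝ → ℝ) (hf : f ∈ calT)
    (hint : (∫ t in (0:ℝ)..1, f t) = 1 / 2)
    (hnonneg : ∀ t ∈ Set.Ico (0:ℝ) 1, 0 ≤ f t) :
    ∃ a : ℤ, 0 < a ∧ Odd a ∧ ∃ c ∈ Set.Ico (0:ℝ) 1,
      (∀ t ∈ Set.Ico (0:ℝ) 1, f t = Int.fract ((a : ℝ) * t + c)) ∨
      (∀ t ∈ Set.Ico (0:ℝ) 1, f t = 1 - Int.fract ((a : ℝ) * t + c)) := by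
  obtain ⟨s, m, c, hrep, hfi, hval, hrcf⟩ := calT_rep f hf
  have hs2 : (s:ℝ)/2 + m = 1/2 := by rw [← hval, hint]
  have hsR : (s:ℝ) = 1 - 2*m := by linarith
  have hs1 : s = 1 - 2*m := by exact_mod_cast hsR
  rcases lt_or_gt_of_ne (show s ≠ 0 by omega) with hneg | hpos
  · -- s < 0 : second disjunct with a = -s
    set A : ℝ := ((-s : ℤ) : ℝ) with hA
    have hApos : (0:ℝ) < A := by rw [hA]; exact_mod_cast (by omega : (0:ℤ) < -s)
    set c₂ : ℝ := Int.fract (-c) with hc₂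
    set g : ℝ → ℝ := fun t => 1 - Int.fract (A * t + c₂) with hg
    have hfg : ∀ t : ℝ, ∃ k : ℤ, f t - g t = k := by
      intro t
      obtain ⟨k, e⟩ := hrep t
      refine ⟨k - 1 - ⌊-c⌋ - ⌊A * t + c₂⌋, ?_⟩
      have e2 : Int.fract (A * t + c₂) = A * t + c₂ - ⌊A * t + c₂⌋ :=
        (Int.self_sub_floor _).symm
      have e3 : c₂ = -c - ⌊-c⌋ := by rw [hc₂, ← Int.self_sub_floor]
      rw [hg]
      simp only []
      rw [e, e2, e3, hA]
      push_cast
      ring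
    have hZ0 : volume {t : ℝ | Int.fract (A * t + c₂) = 0} = 0 := by
      have hsub : {t : ℝ | Int.fract (A * t + c₂) = 0} ⊆ ⋃ k : ℤ, {((k:ℝ) - c₂)/A} := by
        intro t htZ
        have h4 : A * t + c₂ - ⌊A * t + c₂⌋ = 0 := by
          rw [Int.self_sub_floor]; exact htZ
        refine Set.mem_iUnion.2 ⟨⌊A * t + c₂⌋, ?_⟩
        simp only [Set.mem_singleton_iff]
        rw [eq_div_iff hApos.ne']
        linarith
      exact measure_mono_null hsub (measure_iUnion_null fun k => Real.volume_singleton)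
    have hgi : IntervalIntegrable g volume 0 1 :=
      intervalIntegrable_const.sub (intInt_fract_affine A c₂ 0 1)
    have hDnn : ∀ᵐ t ∂(volume.restrict (Set.Ioc (0:ℝ) 1)), 0 ≤ f t - g t := by
      rw [ae_restrict_iff' measurableSet_Ioc]
      filter_upwards [ae_ne_one, compl_mem_ae_iff.2 hZ0] with t hne hz hmem
      have htIco : t ∈ Set.Ico (0:ℝ) 1 := ⟨hmem.1.le, lt_of_le_of_ne hmem.2 hne⟩
      have hfr : 0 < Int.fract (A * t + c₂) :=
        lt_of_le_of_ne (Int.fract_nonneg _) (Ne.symm hz)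
      have hglt : g t < 1 := by rw [hg]; simp only []; linarith
      obtain ⟨k, e⟩ := hfg t
      have hk : (-1:ℝ) < (k:ℝ) := by
        rw [← e]
        have := hnonneg t htIco
        linarith
      have hk0 : (0:ℤ) ≤ k := by
        have : (-1:ℤ) < k := by exact_mod_cast hk
        omega
      rw [e]
      exact_mod_cast hk0
    have hgint : (∫ t in (0:ℝ)..1, f t) = ∫ t in (0:ℝ)..1, g t := by
      rw [hint, hg]
      have h5 : (∫ t in (0:ℝ)..1, (1 - Int.fract (A * t + c₂))) =
          (∫ t in (0:ℝ)..1, (1:ℝ)) - ∫ t in (0:ℝ)..1, Int.fract (A * t + c₂) :=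
        intervalIntegral.integral_sub intervalIntegrable_const (intInt_fract_affine A c₂ 0 1)
      rw [h5, hA, integral_fract_affine (-s) (by omega) c₂]
      simp
      norm_num
    have hrcD : ∀ x, ContinuousWithinAt (fun t => f t - g t) (Set.Ici x) x :=
      fun x => (hrcf x).sub (continuousWithinAt_const.sub (rc_affine hApos.le c₂ x))
    refine ⟨-s, by omega, ⟨m - 1, by omega⟩, c₂, ⟨Int.fract_nonneg _, Int.fract_lt_one _⟩,
      Or.inr ?_⟩
    intro t ht
    have := main_case f g hDnn hfi hgi hgint hrcD t ht
    rw [this, hg]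
  · -- 0 < s : first disjunct with a = s
    set c₁ : ℝ := Int.fract c with hc₁
    set g : ℝ → ℝ := fun t => Int.fract ((s:ℝ) * t + c₁) with hg
    have hfg : ∀ t : ℝ, ∃ k : ℤ, f t - g t = k := by
      intro t
      obtain ⟨k, e⟩ := hrep t
      refine ⟨k + ⌊c⌋ + ⌊(s:ℝ) * t + c₁⌋, ?_⟩
      have e2 : Int.fract ((s:ℝ) * t + c₁) = (s:ℝ) * t + c₁ - ⌊(s:ℝ) * t + c₁⌋ :=
        (Int.self_sub_floor _).symm
      have e3 : c₁ = c - ⌊c⌋ := by rw [hc₁, ← Int.self_sub_floor]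
      rw [hg]
      simp only []
      rw [e, e2, e3]
      push_cast
      ring
    have hgi : IntervalIntegrable g volume 0 1 := intInt_fract_affine (s:ℝ) c₁ 0 1
    have hDnn : ∀ᵐ t ∂(volume.restrict (Set.Ioc (0:ℝ) 1)), 0 ≤ f t - g t := by
      rw [ae_restrict_iff' measurableSet_Ioc]
      filter_upwards [ae_ne_one] with t hne hmem
      have htIco : t ∈ Set.Ico (0:ℝ) 1 := ⟨hmem.1.le, lt_of_le_of_ne hmem.2 hne⟩
      have hglt : g t < 1 := Int.fract_lt_one _
      obtain ⟨k, e⟩ := hfg t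
      have hk : (-1:ℝ) < (k:ℝ) := by
        rw [← e]
        have := hnonneg t htIco
        linarith
      have hk0 : (0:ℤ) ≤ k := by
        have : (-1:ℤ) < k := by exact_mod_cast hk
        omega
      rw [e]
      exact_mod_cast hk0
    have hgint : (∫ t in (0:ℝ)..1, f t) = ∫ t in (0:ℝ)..1, g t := by
      rw [hint, hg, integral_fract_affine s (by omega) c₁]
    have hrcD : ∀ x, ContinuousWithinAt (fun t => f t - g t) (Set.Ici x) x :=
      fun x => (hrcf x).sub (rc_affine (by exact_mod_cast hpos.le) c₁ x)
    refine ⟨s, hpos, ⟨-m, by omega⟩, c₁, ⟨Int.fract_nonneg _, Int.fract_lt_one _⟩, Or.inl ?_⟩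
    intro t ht
    have := main_case f g hDnn hfi hgi hgint hrcD t ht
    rw [this, hg]
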